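/- For every real number a, the matrix F₄⁽¹⁾(a) with rows (1, 1, 1, 1), (1, i·e^{ia}, −1, −i·e^{ia}), (1, −1, 1, −1), (1, −i·e^{ia}, −1, i·e^{ia}) is a dephased complex Hadamard matrix of order 4. Moreover F₄⁽¹⁾(a+π) equals F₄⁽¹⁾(a) with its second and fourth columns exchanged, so F₄⁽¹⁾(a+π) is equivalent to F₄⁽¹⁾(a). -/

import Mathlib

/-- A complex Hadamard matrix: all entries of modulus one, and `H * Hᴴ = N • 1`. -/
def IsComplexHadamard {n : Type*} [Fintype n] [DecidableEq n] (H : Matrix n n ℂ) : Prop :=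
  (∀ i j, ‖H i j‖ = 1) ∧
    H * H.conjTranspose = (Fintype.card n : ℂ) • (1 : Matrix n n ℂ)

/-- Dephased w.r.t. the distinguished index `i0`. -/
def IsDephased {n : Type*} (H : Matrix n n ℂ) (i0 : n) : Prop :=
  (∀ j, H i0 j = 1) ∧ (∀ i, H i i0 = 1)

/-- A diagonal unitary matrix. -/
def IsDiagUnitary {n : Type*} [Fintype n] [DecidableEq n] (D : Matrix n n ℂ) : Prop :=
  ∃ d : n → ℂ, (∀ i, ‖d i‖ = 1) ∧ D = Matrix.diagonal d

/-- A permutation matrix. -/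
def IsPermMatrix {n : Type*} [Fintype n] [DecidableEq n] (P : Matrix n n ℂ) : Prop :=
  ∃ σ : Equiv.Perm n, P = σ.permMatrix ℂ

/-- Equivalence of complex Hadamard matrices. -/
def HadamardEquiv {n : Type*} [Fintype n] [DecidableEq n]
    (H₁ H₂ : Matrix n n ℂ) : Prop :=
  ∃ D₁ P₁ P₂ D₂ : Matrix n n ℂ,
    IsDiagUnitary D₁ ∧ IsDiagUnitary D₂ ∧ IsPermMatrix P₁ ∧ IsPermMatrix P₂ ∧
      H₁ = D₁ * P₁ * H₂ * P₂ * D₂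

/-- The one-parameter family `F₄⁽¹⁾(a)` of `4 × 4` complex Hadamard matrices stemming
from the Fourier matrix `F₄`. -/
noncomputable def F4fam (a : ℝ) : Matrix (Fin 4) (Fin 4) ℂ :=
  !![1, 1, 1, 1;
     1, Complex.I * Complex.exp (Complex.I * a), -1,
        -(Complex.I * Complex.exp (Complex.I * a));
     1, -1, 1, -1;
     1, -(Complex.I * Complex.exp (Complex.I * a)), -1,
        Complex.I * Complex.exp (Complex.I * a)]

/-- For every real `a`, `F₄⁽¹⁾(a)` is a dephased complex Hadamard matrix
of order `4`; moreover `F₄⁽¹⁾(a+π)` equals `F₄⁽¹⁾(a)` with its second and fourth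
columns exchanged, and hence `F₄⁽¹⁾(a+π)` is equivalent to `F₄⁽¹⁾(a)`. -/
theorem F4fam_hadamard (a : ℝ) :
    IsComplexHadamard (F4fam a) ∧ IsDephased (F4fam a) 0 ∧
    (∀ i j : Fin 4, F4fam (a + Real.pi) i j = F4fam a i (Equiv.swap (1 : Fin 4) 3 j)) ∧
    HadamardEquiv (F4fam (a + Real.pi)) (F4fam a) := by
  have habs : ‖Complex.I * Complex.exp (Complex.I * a)‖ = 1 := by
    rw [norm_mul, Complex.norm_I, one_mul, mul_comm, Complex.norm_exp_ofReal_mul_I]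
  have hz : (Complex.I * Complex.exp (Complex.I * a)) *
      (starRingEnd ℂ) (Complex.I * Complex.exp (Complex.I * a)) = 1 := by
    rw [Complex.mul_conj]
    norm_cast
    rw [← Complex.sq_norm, habs]; norm_num
  have hz' : Complex.exp (Complex.I * a) * (starRingEnd ℂ) (Complex.exp (Complex.I * a)) = 1 := by
    rw [Complex.mul_conj]
    norm_cast
    rw [← Complex.sq_norm, mul_comm, Complex.norm_exp_ofReal_mul_I]; norm_num
  have hpi : Complex.exp (Complex.I * (Real.pi : ℂ)) = -1 := by
    rw [mul_comm]; exact Complex.exp_pi_mul_I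
  have hexp : Complex.exp (Complex.I * (↑(a + Real.pi))) = - Complex.exp (Complex.I * a) := by
    rw [Complex.ofReal_add, mul_add, Complex.exp_add, hpi]; ring
  have hswap : ∀ i j : Fin 4,
      F4fam (a + Real.pi) i j = F4fam a i (Equiv.swap (1 : Fin 4) 3 j) := by
    intro i j
    fin_cases i <;> fin_cases j <;>
      simp [F4fam, Complex.ofReal_add, mul_add, Complex.exp_add, hpi, Equiv.swap_apply_def,
        Matrix.vecHead, Matrix.vecTail, Fin.isValue]
  refine ⟨⟨?_, ?_⟩, ⟨?_, ?_⟩, hswap, ?_⟩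
  · intro i j
    fin_cases i <;> fin_cases j <;>
      simp [F4fam, habs, Matrix.vecHead, Matrix.vecTail]
  · ext i j
    fin_cases i <;> fin_cases j <;>
      simp [F4fam, Matrix.mul_apply, Matrix.conjTranspose_apply, Fin.sum_univ_four,
        Matrix.one_apply, Fintype.card_fin, Matrix.smul_apply, Complex.I_sq,
        Matrix.vecHead, Matrix.vecTail] <;>
      first
        | ring1
        | linear_combination (2 : ℂ) * hz'
        | linear_combination (-2 : ℂ) * hz'
        | linear_combination (2 : ℂ) * hz' +
            (-2 * Complex.exp (Complex.I * a) *
              (starRingEnd ℂ) (Complex.exp (Complex.I * a))) * Complex.I_sq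
        | linear_combination (-2 : ℂ) * hz' +
            (2 * Complex.exp (Complex.I * a) *
              (starRingEnd ℂ) (Complex.exp (Complex.I * a))) * Complex.I_sq
  · intro j; fin_cases j <;> simp [F4fam, Matrix.vecHead, Matrix.vecTail]
  · intro i; fin_cases i <;> simp [F4fam, Matrix.vecHead, Matrix.vecTail]
  · refine ⟨1, 1, (Equiv.swap (1 : Fin 4) 3).permMatrix ℂ, 1,
      ⟨fun _ => 1, by simp, by simp [Matrix.diagonal_one]⟩,
      ⟨fun _ => 1, by simp, by simp [Matrix.diagonal_one]⟩,
      ⟨1, by ext i j; simp [Equiv.Perm.permMatrix, PEquiv.toMatrix_apply, Equiv.toPEquiv_apply,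
          Matrix.one_apply, eq_comm]⟩,
      ⟨Equiv.swap (1 : Fin 4) 3, rfl⟩, ?_⟩
    rw [Matrix.one_mul, Matrix.one_mul, Matrix.mul_one]
    rw [Equiv.Perm.permMatrix, PEquiv.mul_toMatrix_toPEquiv]
    ext i j
    rw [Matrix.submatrix_apply, id, Equiv.symm_swap, hswap i j]
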